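/- arXiv:2010.11053 — 4 statements merged into one kernel-verified Lean document; each statement's English description precedes it below -/
import Mathlib

section
/- Let (ℓ_k), (L_k) be as above with every word of L_{k+1} a concatenation of words of L_k, and suppose additionally that every concatenation of two words of L_k is a subword of a concatenation of two words of L_{k+1}. Then for every n, the concatenation of any two words of L_n is a word of the language of X = ⋂_{k≥0} ⟨L_k⟩. -/
/-- The word of length `ℓ` read in the configuration `x : ℤ → A` starting at
position `s`. -/
def blockAt {A : Type*} (x : ℤ → A) (s : ℤ) (ℓ : ℕ) : List A :=
  (List.range ℓ).map fun r => x (s + r)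

/-- The one-dimensional concatenated subshift `⟨L⟩` of a dictionary `L` of
words of length `ℓ`: configurations which, for some offset `u ∈ [0,ℓ)`, are
the infinite concatenation of words of `L` along the grid `u + ℓℤ`. -/
def concatShift {A : Type*} (L : Set (List A)) (ℓ : ℕ) : Set (ℤ → A) :=
  {x | ∃ u : ℤ, 0 ≤ u ∧ u < (ℓ : ℤ) ∧ ∀ v : ℤ, blockAt x (u + (ℓ : ℤ) * v) ℓ ∈ L}

/-!
Iterating the hypothesis on pairs, a concatenation of two words of `L_m` can be placed in the
interior (with nonempty margins on both sides) of a concatenation of two words of some `L_M`,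
`M > m`. Starting from `u ++ v`, this yields a sequence of words, each in the interior of the
next, whose union is a configuration `x` containing `u ++ v`. The `j`-th word lies at a level
`≥ j`, so for `j ≥ m` it is cut into words of `L_m` along a grid; by pigeonhole infinitely many
of these grids agree modulo `ℓ_m`, and together they exhibit `x ∈ ⟨L_m⟩`.
-/

open Computability

namespace List

variable {α : Type*}

theorem length_flatten_of_forall_length_eq {ws : List (List α)} {l : ℕ}
    (h : ∀ w ∈ ws, w.length = l) : ws.flatten.length = ws.length * l := by
  rw [length_flatten, map_congr_left h, map_const', sum_replicate, smul_eq_mul]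

theorem take_drop_mul_flatten_of_forall_length_eq {ws : List (List α)} {l : ℕ}
    (h : ∀ w ∈ ws, w.length = l) {q : ℕ} (hq : q < ws.length) :
    (ws.flatten.drop (l * q)).take l = ws[q] := by
  induction ws generalizing q with
  | nil => simp at hq
  | cons w ws ih =>
    have hw : w.length = l := h w mem_cons_self
    cases q with
    | zero => simp [← hw]
    | succ q =>
      rw [flatten_cons, mul_add_one, add_comm, ← hw, ← drop_drop, drop_left, hw]
      exact ih (fun v hv => h v (mem_cons_of_mem w hv)) (by simpa using hq)

end List

theorem exists_seq_of_forall_exists {α : Type*} {P : α → Prop} {R : α → α → Prop}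
    (h : ∀ a, P a → ∃ b, P b ∧ R a b) {a₀ : α} (h₀ : P a₀) :
    ∃ f : ℕ → α, f 0 = a₀ ∧ ∀ j, P (f j) ∧ R (f j) (f (j + 1)) := by
  choose! next hnext using h
  have hP : ∀ j, P (next^[j] a₀) := by
    intro j
    induction j with
    | zero => exact h₀
    | succ j ih => rw [Function.iterate_succ_apply']; exact (hnext _ ih).1
  refine ⟨fun j => next^[j] a₀, rfl, fun j => ⟨hP j, ?_⟩⟩
  simpa only [Function.iterate_succ_apply'] using (hnext _ (hP j)).2

section

variable {A : Type*}

theorem blockAt_eq_map_range (x : ℤ → A) (s : ℤ) (l : ℕ) :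
    blockAt x s l = (List.range l).map fun r : ℕ => x (s + r) := by
  simp [blockAt, ← List.map_eq_flatMap, Function.comp_def]

@[simp]
theorem length_blockAt (x : ℤ → A) (s : ℤ) (l : ℕ) : (blockAt x s l).length = l := by
  simp [blockAt_eq_map_range]

@[simp]
theorem getElem_blockAt (x : ℤ → A) (s : ℤ) (l r : ℕ) (h : r < (blockAt x s l).length) :
    (blockAt x s l)[r] = x (s + r) := by
  simp [blockAt_eq_map_range]

theorem blockAt_add_eq_take_drop (x : ℤ → A) (s : ℤ) {k l R : ℕ} (h : k + l ≤ R) :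
    blockAt x (s + k) l = ((blockAt x s R).drop k).take l := by
  refine List.ext_getElem (by simp; omega) fun r h₁ h₂ => ?_
  simp [add_assoc]

theorem blockAt_mem_of_mem_kstar {L : Language A} {l : ℕ} (hl : 0 < l)
    (hlen : ∀ w ∈ L, w.length = l) {x : ℤ → A} {s : ℤ} {R : ℕ}
    (hx : blockAt x s R ∈ L∗) {q : ℕ} (hq : l * q + l ≤ R) :
    blockAt x (s + (l * q : ℕ)) l ∈ L := by
  obtain ⟨ws, hws, hL⟩ := Language.mem_kstar.mp hx
  have hws_len : ∀ w ∈ ws, w.length = l := fun w hw => hlen w (hL w hw)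
  have hR : R = ws.length * l := by
    rw [← length_blockAt x s R, hws, List.length_flatten_of_forall_length_eq hws_len]
  have hq' : q < ws.length :=
    Nat.le_of_mul_le_mul_right (show (q + 1) * l ≤ ws.length * l by linarith) hl
  rw [blockAt_add_eq_take_drop x s hq, hws,
    List.take_drop_mul_flatten_of_forall_length_eq hws_len hq']
  exact hL _ (List.getElem_mem hq')

theorem mem_concatShift_of_forall_mem_kstar {L : Language A} {l : ℕ} (hl : 0 < l)
    (hlen : ∀ w ∈ L, w.length = l) {x : ℤ → A} (s : ℕ → ℤ) (R : ℕ → ℕ)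
    (hs : ∀ j : ℕ, s j ≤ -j) (hR : ∀ j : ℕ, (j : ℤ) ≤ s j + R j) (N : ℕ)
    (hx : ∀ j ≥ N, blockAt x (s j) (R j) ∈ L∗) : x ∈ concatShift L l := by
  have : NeZero l := ⟨hl.ne'⟩
  -- pigeonhole: infinitely many of the windows start in the same residue class modulo `l`
  obtain ⟨o, ho⟩ := Finite.exists_infinite_fiber fun j => (s j : ZMod l)
  refine ⟨o.val, by positivity, by exact_mod_cast ZMod.val_lt o, fun v => ?_⟩
  set t : ℤ := o.val + l * v
  obtain ⟨j, hj, hjt⟩ := (Set.infinite_coe_iff.mp ho).exists_gt (t.natAbs + l + N)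
  obtain ⟨q, hq⟩ : (l : ℤ) ∣ t - s j := by
    rw [← ZMod.intCast_eq_intCast_iff_dvd_sub]
    simpa [t] using hj
  have := hR j
  have := hs j
  lift q to ℕ using
    (mul_nonneg_iff_of_pos_left (by positivity : (0 : ℤ) < l)).mp (by omega)
  rw [show t = s j + (l * q : ℕ) by push_cast; omega]
  exact blockAt_mem_of_mem_kstar hl hlen (hx j (by omega)) (by omega)

def IsInteriorInfix (w w' : List A) : Prop :=
  ∃ g h, g ≠ [] ∧ h ≠ [] ∧ g ++ w ++ h = w'

theorem exists_blockAt_eq_of_nested [Nonempty A] (W : ℕ → List A) (s : ℕ → ℤ)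
    (hW : ∀ j, ∃ g h, g ++ W j ++ h = W (j + 1) ∧ s (j + 1) + g.length = s j)
    (hcover : ∀ i, ∃ j, s j ≤ i ∧ i < s j + (W j).length) :
    ∃ x : ℤ → A, ∀ j, blockAt x (s j) (W j).length = W j := by
  have hle : ∀ j k, j ≤ k → ∃ g h, g ++ W j ++ h = W k ∧ s k + g.length = s j := by
    intro j k hjk
    induction k, hjk using Nat.le_induction with
    | base => exact ⟨[], [], by simp, by simp⟩
    | succ k _ ih =>
      obtain ⟨g, h, hk, hs⟩ := ih
      obtain ⟨g', h', hW', hs'⟩ := hW k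
      exact ⟨g' ++ g, h ++ h', by simp [← hW', ← hk], by simp; omega⟩
  let val (j : ℕ) (i : ℤ) : A := (W j).getD (i - s j).toNat (Classical.arbitrary A)
  have hval : ∀ j k, j ≤ k → ∀ i, s j ≤ i → i < s j + (W j).length → val k i = val j i := by
    intro j k hjk i hi₁ hi₂
    obtain ⟨g, h, hk, hs⟩ := hle j k hjk
    have : (i - s k).toNat = g.length + (i - s j).toNat := by omega
    have hlt : (i - s j).toNat < (W j).length := by omega
    simp only [val, ← hk, this, List.getD_eq_getElem?_getD, List.append_assoc,
      List.getElem?_append_right (Nat.le_add_right _ _), Nat.add_sub_cancel_left,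
      List.getElem?_append_left hlt]
  choose J hJ using hcover
  refine ⟨fun i => val (J i) i, fun j => List.ext_getElem (by simp) fun r _ hr => ?_⟩
  obtain ⟨hr₁, hr₂⟩ := hJ (s j + r)
  rw [getElem_blockAt, ← hval (J (s j + r)) (max j (J (s j + r))) (le_max_right _ _) _ hr₁ hr₂,
    hval j _ (le_max_left _ _) _ (by omega) (by omega)]
  simp [val, hr]

theorem exists_blockAt_eq_of_isInteriorInfix (W : ℕ → List A)
    (hW : ∀ j, IsInteriorInfix (W j) (W (j + 1))) :
    ∃ x : ℤ → A, ∃ s : ℕ → ℤ,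
      ∀ j, s j ≤ -j ∧ (j : ℤ) ≤ s j + (W j).length ∧ blockAt x (s j) (W j).length = W j := by
  choose g h hg hh hW using hW
  have : Nonempty A := let ⟨a, _⟩ := List.exists_mem_of_ne_nil _ (hg 0); ⟨a⟩
  let s (j : ℕ) : ℤ := -∑ i ∈ Finset.range j, ((g i).length : ℤ)
  have hs : ∀ j, s (j + 1) + (g j).length = s j := by simp [s, Finset.sum_range_succ]
  have hwin : ∀ j : ℕ, s j ≤ -j ∧ (j : ℤ) ≤ s j + (W j).length := by
    intro j
    induction j with
    | zero => simp [s]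
    | succ j ih =>
      have := hs j
      have := List.length_pos_iff.mpr (hg j)
      have := List.length_pos_iff.mpr (hh j)
      have hlen := congrArg List.length (hW j)
      simp only [List.length_append] at hlen
      push_cast
      omega
  obtain ⟨x, hx⟩ := exists_blockAt_eq_of_nested W s (fun j => ⟨g j, h j, hW j, hs j⟩)
    fun i => ⟨i.natAbs + 1, by have := hwin (i.natAbs + 1); omega⟩
  exact ⟨x, s, fun j => ⟨(hwin j).1, (hwin j).2, hx j⟩⟩

section Dictionaries

variable {ℓ : ℕ → ℕ} {L : ℕ → Language A}

theorem le_kstar_of_le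
    (hconcat : ∀ k, ∀ w ∈ L (k + 1), ∃ ws : List (List A), (∀ v ∈ ws, v ∈ L k) ∧ ws.flatten = w)
    {m M : ℕ} (hmM : m ≤ M) : L M ≤ (L m)∗ := by
  induction M, hmM using Nat.le_induction with
  | base => exact le_kstar
  | succ M _ ih =>
    have hstep : L (M + 1) ≤ (L M)∗ := fun w hw =>
      let ⟨ws, hws, hflat⟩ := hconcat M w hw
      Language.mem_kstar.mpr ⟨ws, hflat.symm, hws⟩
    exact (hstep.trans (kstar_mono ih)).trans_eq (kstar_idem _)

theorem mul_le_kstar_of_le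
    (hconcat : ∀ k, ∀ w ∈ L (k + 1), ∃ ws : List (List A), (∀ v ∈ ws, v ∈ L k) ∧ ws.flatten = w)
    {m M : ℕ} (hmM : m ≤ M) : L M * L M ≤ (L m)∗ :=
  (mul_le_mul' (le_kstar_of_le hconcat hmM) (le_kstar_of_le hconcat hmM)).trans_eq
    (kstar_mul_kstar _)

theorem two_mul_le_of_mem (hmono : StrictMono ℓ) (hlen : ∀ k, ∀ w ∈ L k, w.length = ℓ k)
    (hconcat : ∀ k, ∀ w ∈ L (k + 1), ∃ ws : List (List A), (∀ v ∈ ws, v ∈ L k) ∧ ws.flatten = w)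
    {m : ℕ} {E : List A} (hE : E ∈ L (m + 1)) : 2 * ℓ m ≤ ℓ (m + 1) := by
  obtain ⟨ws, hws, rfl⟩ := hconcat m E hE
  have hE' : ℓ (m + 1) = ws.length * ℓ m := by
    rw [← hlen _ _ hE, List.length_flatten_of_forall_length_eq fun w hw => hlen m w (hws w hw)]
  have hlt : 1 * ℓ m < ws.length * ℓ m := by rw [one_mul, ← hE']; exact hmono m.lt_succ_self
  rw [hE']
  exact Nat.mul_le_mul_right _ (Nat.lt_of_mul_lt_mul_right hlt)

theorem exists_isInteriorInfix_of_infix (hmono : StrictMono ℓ) (hpos : ∀ k, 0 < ℓ k)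
    (hlen : ∀ k, ∀ w ∈ L k, w.length = ℓ k)
    (hsub : ∀ k, ∀ u ∈ L k, ∀ v ∈ L k,
      ∃ u' ∈ L (k + 1), ∃ v' ∈ L (k + 1), (u ++ v) <:+: (u' ++ v'))
    {M : ℕ} {W w : List A} (hW : W ∈ L M) (hw : w <:+: W) :
    ∃ M' > M, ∃ W' ∈ L M' * L M', IsInteriorInfix w W' := by
  obtain ⟨α, β, rfl⟩ := hw
  -- in `W ++ W <:+: E ++ F`, the first copy of `W` is a nonempty left margin for `w`
  have hWlen : α.length + w.length + β.length = ℓ M := by simpa [add_assoc] using hlen M _ hW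
  have hWne : α ++ w ++ β ≠ [] := List.ne_nil_of_length_pos (by simp; have := hpos M; omega)
  have hMM := hmono (Nat.lt_add_one M)
  obtain ⟨E, hE, F, hF, a, b, hab⟩ := hsub M _ hW _ hW
  by_cases hb : β ++ b = []
  · -- `w` ends `E ++ F` and is shorter than `F`, so it is a proper suffix of `F`;
    -- doubling `F` then puts it in the interior
    obtain ⟨rfl, rfl⟩ := List.append_eq_nil_iff.mp hb
    have hsuf : w <:+ F :=
      List.suffix_of_suffix_length_le ⟨a ++ (α ++ w) ++ α, by rw [← hab]; simp⟩
        (List.suffix_append E F) (by rw [hlen _ F hF]; simp at hWlen; omega)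
    obtain ⟨α', rfl⟩ := hsuf
    have hα' : α' ≠ [] := by
      have := hlen _ _ hF
      simp only [List.length_append] at this
      exact List.ne_nil_of_length_pos (by simp at hWlen; omega)
    obtain ⟨E', hE', F', hF', a', b', hab'⟩ := hsub (M + 1) _ hF _ hF
    exact ⟨M + 2, by omega, E' ++ F', Language.append_mem_mul hE' hF', a' ++ α', α' ++ w ++ b',
      by simp [hα'], by simp [hα'], by rw [← hab']; simp⟩
  · exact ⟨M + 1, by omega, E ++ F, Language.append_mem_mul hE hF, a ++ (α ++ w ++ β) ++ α,
      β ++ b, List.append_ne_nil_of_left_ne_nil (List.append_ne_nil_of_right_ne_nil a hWne) α,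
      hb, by rw [← hab]; simp⟩

theorem exists_isInteriorInfix_of_mem_mul (hmono : StrictMono ℓ) (hpos : ∀ k, 0 < ℓ k)
    (hlen : ∀ k, ∀ w ∈ L k, w.length = ℓ k)
    (hconcat : ∀ k, ∀ w ∈ L (k + 1), ∃ ws : List (List A), (∀ v ∈ ws, v ∈ L k) ∧ ws.flatten = w)
    (hsub : ∀ k, ∀ u ∈ L k, ∀ v ∈ L k,
      ∃ u' ∈ L (k + 1), ∃ v' ∈ L (k + 1), (u ++ v) <:+: (u' ++ v'))
    {m : ℕ} {w : List A} (hw : w ∈ L m * L m) :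
    ∃ M > m, ∃ W ∈ L M * L M, IsInteriorInfix w W := by
  obtain ⟨c, hc, d, hd, rfl⟩ := Language.mem_mul.mp hw
  obtain ⟨E, hE, F, hF, a, b, hab⟩ := hsub m c hc d hd
  have hcd : (c ++ d).length ≤ ℓ (m + 1) := by
    have := two_mul_le_of_mem hmono hlen hconcat hE
    rw [List.length_append, hlen m c hc, hlen m d hd]; omega
  -- if a margin is empty, `c ++ d` (of length `2 * ℓ m ≤ ℓ (m + 1)`) lies inside `E` or `F`
  by_cases ha : a = []
  · have hpre : c ++ d <+: E :=
      List.prefix_of_prefix_length_le ⟨b, by simpa [ha] using hab⟩ (List.prefix_append E F)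
        (hlen _ E hE ▸ hcd)
    obtain ⟨M, hM, hMw⟩ :=
      exists_isInteriorInfix_of_infix hmono hpos hlen hsub hE hpre.isInfix
    exact ⟨M, by omega, hMw⟩
  by_cases hb : b = []
  · have hsuf : c ++ d <:+ F :=
      List.suffix_of_suffix_length_le ⟨a, by simpa [hb] using hab⟩ (List.suffix_append E F)
        (hlen _ F hF ▸ hcd)
    obtain ⟨M, hM, hMw⟩ :=
      exists_isInteriorInfix_of_infix hmono hpos hlen hsub hF hsuf.isInfix
    exact ⟨M, by omega, hMw⟩
  exact ⟨m + 1, by omega, E ++ F, Language.append_mem_mul hE hF, a, b, ha, hb, hab⟩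

theorem exists_seq_isInteriorInfix (hmono : StrictMono ℓ) (hpos : ∀ k, 0 < ℓ k)
    (hlen : ∀ k, ∀ w ∈ L k, w.length = ℓ k)
    (hconcat : ∀ k, ∀ w ∈ L (k + 1), ∃ ws : List (List A), (∀ v ∈ ws, v ∈ L k) ∧ ws.flatten = w)
    (hsub : ∀ k, ∀ u ∈ L k, ∀ v ∈ L k,
      ∃ u' ∈ L (k + 1), ∃ v' ∈ L (k + 1), (u ++ v) <:+: (u' ++ v'))
    {n : ℕ} {w : List A} (hw : w ∈ L n * L n) :
    ∃ W : ℕ → List A, W 0 = w ∧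
      ∀ j, IsInteriorInfix (W j) (W (j + 1)) ∧ ∀ m ≤ j, W j ∈ (L m)∗ := by
  obtain ⟨f, hf0, hf⟩ := exists_seq_of_forall_exists
    (P := fun p : ℕ × List A => p.2 ∈ L p.1 * L p.1)
    (R := fun p q => p.1 < q.1 ∧ IsInteriorInfix p.2 q.2)
    (fun _ hp =>
      let ⟨M, hM, W, hW, hpW⟩ := exists_isInteriorInfix_of_mem_mul hmono hpos hlen hconcat hsub hp
      ⟨(M, W), hW, hM, hpW⟩)
    (a₀ := (n, w)) hw
  have hlevel : ∀ j, j ≤ (f j).1 := by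
    intro j
    induction j with
    | zero => exact Nat.zero_le _
    | succ j ih => exact ih.trans_lt (hf j).2.1
  refine ⟨fun j => (f j).2, by simp [hf0], fun j => ⟨(hf j).2.2, fun m hm => ?_⟩⟩
  exact mul_le_kstar_of_le hconcat (hm.trans (hlevel j)) (hf j).1

end Dictionaries

end

/-- If, in addition to the concatenation hypothesis, every concatenation of
two words of `L_k` is a subword of a concatenation of two words of `L_{k+1}`,
then for every `n` the concatenation of any two words of `L_n` belongs to the
language of `X = ⋂_k ⟨L_k⟩`, i.e. it appears in some configuration of `X`. -/
theorem stmt_11 {A : Type*} (ℓ : ℕ → ℕ) (hmono : StrictMono ℓ) (hpos : ∀ k, 0 < ℓ k)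
    (L : ℕ → Set (List A))
    (hlen : ∀ k, ∀ w ∈ L k, w.length = ℓ k)
    (hconcat : ∀ k, ∀ w ∈ L (k + 1),
      ∃ ws : List (List A), (∀ v ∈ ws, v ∈ L k) ∧ ws.flatten = w)
    (hsub : ∀ k, ∀ u ∈ L k, ∀ v ∈ L k,
      ∃ u' ∈ L (k + 1), ∃ v' ∈ L (k + 1), (u ++ v) <:+: (u' ++ v'))
    (n : ℕ) (u v : List A) (hu : u ∈ L n) (hv : v ∈ L n) :
    ∃ x ∈ ⋂ k, concatShift (L k) (ℓ k),
      ∃ s : ℤ, blockAt x s (u ++ v).length = u ++ v := by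
  obtain ⟨W, hW0, hW⟩ :=
    exists_seq_isInteriorInfix hmono hpos hlen hconcat hsub (Language.append_mem_mul hu hv)
  obtain ⟨x, s, hx⟩ := exists_blockAt_eq_of_isInteriorInfix W fun j => (hW j).1
  refine ⟨x, Set.mem_iInter.2 fun m => ?_, s 0, hW0 ▸ (hx 0).2.2⟩
  exact mem_concatShift_of_forall_mem_kstar (hpos m) (hlen m) s (fun j => (W j).length)
    (fun j => (hx j).1) (fun j => (hx j).2.1) m fun j hj => by
      rw [(hx j).2.2]; exact (hW j).2 m hj
end

section
/- In the iterative construction, for k ≥ 2 even, two copies of a_k = a_{k-1} 1^{(N_k-2)ℓ_{k-1}} a_{k-1} can only overlap so that the shift s satisfies s ≥ (N_k - 1)ℓ_{k-1}; i.e., the initial copy of a_{k-1} of one word overlaps the terminal copy of a_{k-1} of the other. -/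
/-- The lengths `ℓ_k` of the blocks in the iterative construction:
`ℓ_0 = 2`, `ℓ_k = N_k · ℓ_{k-1}`. -/
def lenSeq (N : ℕ → ℕ) : ℕ → ℕ
  | 0 => 2
  | k + 1 => N (k + 1) * lenSeq N (k)

/-- The blocks `a_k` over the alphabet `{0,1,2}` (encoded as `Fin 3`):
`a_0 = 01`; for `k` odd `a_k = (a_{k-1})^{N_k}`, and for `k ≥ 2` even
`a_k = a_{k-1} 1^{(N_k-2)ℓ_{k-1}} a_{k-1}`. -/
def wordA (N : ℕ → ℕ) : ℕ → List (Fin 3)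
  | 0 => [0, 1]
  | k + 1 =>
    if (k + 1) % 2 = 1 then
      (List.replicate (N (k + 1)) (wordA N k)).flatten
    else
      wordA N k ++ List.replicate ((N (k + 1) - 2) * lenSeq N k) 1 ++ wordA N k

/-- The blocks `b_k` over `{0,1,2}`: `b_0 = 02`; for `k` odd
`b_k = b_{k-1} 2^{(N_k-2)ℓ_{k-1}} b_{k-1}`, and for `k ≥ 2` even
`b_k = (b_{k-1})^{N_k}`. -/
def wordB (N : ℕ → ℕ) : ℕ → List (Fin 3)
  | 0 => [0, 2]
  | k + 1 =>
    if (k + 1) % 2 = 1 then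
      wordB N k ++ List.replicate ((N (k + 1) - 2) * lenSeq N k) 2 ++ wordB N k
    else
      (List.replicate (N (k + 1)) (wordB N k)).flatten

/-- Two words `u`, `v` overlap if some proper nonempty terminal segment of `u`
coincides with the initial segment of `v` of the same length (shift
`0 < s < |u|`; full coincidence is excluded). -/
def Overlap {A : Type*} (u v : List A) : Prop :=
  ∃ s : ℕ, 0 < s ∧ s < u.length ∧ u.drop s = v.take (u.length - s)

/-!
Write `a_k = u 1ⁿ u` with `u = a_{k-1}`, which starts with `0`, and `n = (N_k - 2)ℓ_{k-1} ≥ ℓ_{k-1}`.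
If the shift satisfied `s < ℓ_{k-1} + n`, the overlap would match a `0` against a letter of `1ⁿ`:
the first letter of the word when `s ≥ ℓ_{k-1}`, and the first letter of the second `u` when
`s < ℓ_{k-1}`.
-/

namespace List

variable {α : Type*}

theorem getElem?_add_eq_of_drop_eq_take {w : List α} {s i : ℕ}
    (hov : w.drop s = w.take (w.length - s)) (hi : s + i < w.length) :
    w[s + i]? = w[i]? := by
  have h := congrArg (·[i]?) hov
  simp only [getElem?_drop, getElem?_take] at h
  rwa [if_pos (by omega)] at h

theorem length_add_le_of_drop_eq_take_append_replicate {a b : α} (hab : a ≠ b)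
    {u : List α} (hu : u[0]? = some a) {n s : ℕ} (hn : u.length ≤ n + 1) (hs : 0 < s)
    (hov : (u ++ replicate n b ++ u).drop s =
      (u ++ replicate n b ++ u).take ((u ++ replicate n b ++ u).length - s)) :
    u.length + n ≤ s := by
  set w := u ++ replicate n b ++ u
  set ℓ := u.length
  have hℓ : 0 < ℓ := length_pos_iff_exists_mem.mpr ⟨a, mem_of_getElem? hu⟩
  have hw : w.length = ℓ + n + ℓ := by simp only [w, ℓ, length_append, length_replicate]
  have hfirst : w[0]? = some a := by simp [w, getElem?_append_left hℓ, hu]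
  have hlast : w[ℓ + n]? = some a := by
    rw [getElem?_append_right (by simp [ℓ])]; simpa [ℓ] using hu
  have hmid : ∀ j, ℓ ≤ j → j < ℓ + n → w[j]? = some b := by
    intro j hj hjn
    rw [getElem?_append_left (by simp; omega), getElem?_append_right hj,
      getElem?_replicate, if_pos (by omega)]
  by_contra! hsn
  rcases lt_or_ge s ℓ with hsℓ | hsℓ
  · have h := getElem?_add_eq_of_drop_eq_take hov (i := ℓ + n - s) (by omega)
    rw [show s + (ℓ + n - s) = ℓ + n by omega, hlast, hmid _ (by omega) (by omega)] at h
    exact hab (Option.some_injective _ h)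
  · have h := getElem?_add_eq_of_drop_eq_take hov (i := 0) (by omega)
    rw [add_zero, hfirst, hmid s hsℓ hsn] at h
    exact hab (Option.some_injective _ h).symm

end List

theorem length_wordA (N : ℕ → ℕ) (hN : ∀ k, 1 ≤ k → 2 ≤ N k) (m : ℕ) :
    (wordA N m).length = lenSeq N m := by
  induction m with
  | zero => rfl
  | succ m ih =>
    obtain ⟨c, hc⟩ : ∃ c, N (m + 1) = c + 2 := ⟨N (m + 1) - 2, by have := hN (m + 1); omega⟩
    rw [wordA]
    split
    · simp [ih, lenSeq]
    · simp only [List.length_append, List.length_replicate, ih, lenSeq, hc, Nat.add_sub_cancel]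
      ring

theorem getElem?_zero_wordA (N : ℕ → ℕ) (hN : ∀ k, 1 ≤ k → 1 ≤ N k) (m : ℕ) :
    (wordA N m)[0]? = some 0 := by
  induction m with
  | zero => rfl
  | succ m ih =>
    rw [wordA]
    split
    · obtain ⟨c, hc⟩ : ∃ c, N (m + 1) = c + 1 := ⟨N (m + 1) - 1, by have := hN (m + 1); omega⟩
      rw [hc, List.replicate_succ, List.flatten_cons, List.getElem?_append_left
        (List.length_pos_iff_exists_mem.mpr ⟨0, List.mem_of_getElem? ih⟩), ih]
    · rw [List.append_assoc, List.getElem?_append_left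
        (List.length_pos_iff_exists_mem.mpr ⟨0, List.mem_of_getElem? ih⟩), ih]

theorem wordA_of_even (N : ℕ → ℕ) {m : ℕ} (hm : Even (m + 1)) :
    wordA N (m + 1) =
      wordA N m ++ List.replicate ((N (m + 1) - 2) * lenSeq N m) 1 ++ wordA N m := by
  rw [wordA, if_neg (Nat.not_odd_iff_even.mpr hm ∘ Nat.odd_iff.mpr)]

theorem stmt_14_general (N : ℕ → ℕ) (hN : ∀ k, 1 ≤ k → 4 ≤ N k)
    (k : ℕ) (hk : 2 ≤ k) (hke : Even k) (s : ℕ)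
    (hs0 : 0 < s)
    (hov : (wordA N k).drop s = (wordA N k).take (lenSeq N k - s)) :
    (N k - 1) * lenSeq N (k - 1) ≤ s := by
  obtain ⟨m, rfl⟩ : ∃ m, k = m + 1 := ⟨k - 1, by omega⟩
  have h4 : 4 ≤ N (m + 1) := hN _ (by omega)
  have hN2 : ∀ k, 1 ≤ k → 2 ≤ N k := fun k hk => (hN k hk).trans' (by norm_num)
  have hlen : (wordA N m).length = lenSeq N m := length_wordA N hN2 m
  rw [← length_wordA N hN2, wordA_of_even N hke] at hov
  have hfit := List.length_add_le_of_drop_eq_take_append_replicate (by decide)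
    (getElem?_zero_wordA N (fun k hk => (hN2 k hk).trans' (by norm_num)) m)
    (by rw [hlen]; exact le_add_right (Nat.le_mul_of_pos_left _ (by omega))) hs0 hov
  rw [hlen] at hfit
  rw [Nat.add_sub_cancel, show N (m + 1) - 1 = 1 + (N (m + 1) - 2) by omega, add_mul, one_mul]
  exact hfit

/-- For `k ≥ 2` even, two copies of `a_k = a_{k-1} 1^{(N_k-2)ℓ_{k-1}} a_{k-1}`
can only overlap with shift `s ≥ (N_k - 1)·ℓ_{k-1}`, i.e. the initial copy of
`a_{k-1}` of one word overlaps the terminal copy of `a_{k-1}` of the other. -/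
theorem stmt_14 (N : ℕ → ℕ) (hN : ∀ k, 1 ≤ k → 4 ≤ N k)
    (k : ℕ) (hk : 2 ≤ k) (hke : Even k) (s : ℕ)
    (hs0 : 0 < s) (hs1 : s < lenSeq N k)
    (hov : (wordA N k).drop s = (wordA N k).take (lenSeq N k - s)) :
    (N k - 1) * lenSeq N (k - 1) ≤ s :=
  stmt_14_general N hN k hk hke s hs0 hov
end

section
/- Let k ≥ 0 and let ν be an ergodic shift-invariant probability measure on Σ²(A) with supp(ν) ⊆ ⟨L_k⟩, where L_k ⊆ A^{[1,ℓ_k]²} is a dictionary of globally admissible square patterns for a subshift X defined by forbidden patterns F ⊆ A^{[1,D]²}. Then ν(F̄) ≤ 2D/ℓ_k, where F̄ = [F] is the union of cylinders of F at the origin. -/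
open MeasureTheory

/-- Bidimensional configurations over the alphabet `A`. -/
abbrev Config2 (A : Type*) := (ℤ × ℤ) → A

/-- The shift action on `A^(ℤ²)`: `(σᵘ x) v = x (u + v)`. -/
def shiftC {A : Type*} (u : ℤ × ℤ) (x : Config2 A) : Config2 A :=
  fun v => x (u.1 + v.1, u.2 + v.2)

/-- The `m × m` square pattern read in `x` on the box `[1,m]²` (a position
`q : Fin m × Fin m` encodes the lattice point `(q₁ + 1, q₂ + 1)`). -/
def patternAt {A : Type*} {m : ℕ} (x : Config2 A) : (Fin m × Fin m) → A :=
  fun q => x ((q.1 : ℤ) + 1, (q.2 : ℤ) + 1)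

/-- The cylinder generated by a set `P` of `m × m` square patterns. -/
def cylOf {A : Type*} {m : ℕ} (P : Set ((Fin m × Fin m) → A)) : Set (Config2 A) :=
  {x | patternAt x ∈ P}

/-- The bidimensional concatenated subshift `⟨L⟩` of a dictionary `L` of
`ℓ × ℓ` square patterns. -/
def concat2 {A : Type*} {ℓ : ℕ} (L : Set ((Fin ℓ × Fin ℓ) → A)) : Set (Config2 A) :=
  {x | ∃ u : ℤ × ℤ, 0 ≤ u.1 ∧ u.1 < (ℓ : ℤ) ∧ 0 ≤ u.2 ∧ u.2 < (ℓ : ℤ) ∧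
    ∀ v : ℤ × ℤ, shiftC (u.1 + (ℓ : ℤ) * v.1, u.2 + (ℓ : ℤ) * v.2) x ∈ cylOf L}

/-!
Shift invariance gives, for measurable `B`, that `(Kℓ)² ν(B)` is the integral of the number of
the `(Kℓ)²` shifts by `D • m`, `m ∈ [0, Kℓ)²`, that send `x` into `B`. In a point of `⟨L⟩` the
forbidden patterns only occur across the lines of its `ℓ`-grid, and along each axis the
sublattice `Dℤ²` meets at most one such position per grid period; so that number is at most
`2(DK + 1)Kℓ`, and letting `K → ∞` gives `ℓ ν(B) ≤ 2D`.

The σ-algebra of `A` is arbitrary, so `[F]` need not be measurable. A measurable full-measure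
`M ⊆ ⟨L⟩` only sees a countable family `C` of measurable sets of `A`, and `B` is taken to be the
set of occurrences of `F` up to `C`-indistinguishability, which is measurable and contains `[F]`.
Only shifts in `Dℤ²` are counted because the `D × D` blocks there are disjoint: all relaxed
occurrences on them can be made genuine at once without leaving `M`.
-/

open scoped ENNReal

section Separating

variable {α : Type*}

def IndistinguishableBy (C : Set (Set α)) (a b : α) : Prop :=
  ∀ s ∈ C, a ∈ s ↔ b ∈ s

def IsSaturatedBy {ι : Type*} (C : Set (Set α)) (M : Set (ι → α)) : Prop :=
  ∀ x y : ι → α, (∀ i, IndistinguishableBy C (x i) (y i)) → x ∈ M → y ∈ M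

lemma IndistinguishableBy.refl (C : Set (Set α)) (a : α) : IndistinguishableBy C a a :=
  fun _ _ => Iff.rfl

lemma IndistinguishableBy.symm {C : Set (Set α)} {a b : α} (h : IndistinguishableBy C a b) :
    IndistinguishableBy C b a :=
  fun s hs => (h s hs).symm

variable [MeasurableSpace α]

lemma measurableSet_indistinguishableBy {C : Set (Set α)} (hC : C.Countable)
    (hCm : ∀ s ∈ C, MeasurableSet s) (a : α) :
    MeasurableSet {b | IndistinguishableBy C a b} := by
  have h : {b | IndistinguishableBy C a b} = ⋂ s ∈ C, {b | a ∈ s ↔ b ∈ s} := by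
    ext b
    simp [IndistinguishableBy]
  rw [h]
  refine .biInter hC fun s hs => ?_
  by_cases ha : a ∈ s
  · simpa [ha] using hCm s hs
  · simpa [ha, ← Set.compl_ofPred] using (hCm s hs).compl

-- The sets with this property form a σ-algebra containing the measurable cylinders.
lemma MeasurableSet.exists_countable_saturated {ι : Type*} {M : Set (ι → α)}
    (hM : MeasurableSet M) :
    ∃ C : Set (Set α), C.Countable ∧ (∀ s ∈ C, MeasurableSet s) ∧ IsSaturatedBy C M := by
  let m : MeasurableSpace (ι → α) :=
    { MeasurableSet' := fun W =>
        ∃ C : Set (Set α), C.Countable ∧ (∀ s ∈ C, MeasurableSet s) ∧ IsSaturatedBy C W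
      measurableSet_empty := ⟨∅, Set.countable_empty, by simp, fun _ _ _ => id⟩
      measurableSet_compl := by
        rintro W ⟨C, hC, hCm, hW⟩
        exact ⟨C, hC, hCm, fun x y h hy hx => hy (hW y x (fun i => (h i).symm) hx)⟩
      measurableSet_iUnion := by
        intro W hW
        choose C hC hCm hWC using hW
        refine ⟨⋃ n, C n, Set.countable_iUnion hC, fun s hs => ?_, fun x y h hx => ?_⟩
        · obtain ⟨n, hn⟩ := Set.mem_iUnion.mp hs
          exact hCm n s hn
        · obtain ⟨n, hn⟩ := Set.mem_iUnion.mp hx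
          exact Set.mem_iUnion.mpr
            ⟨n, hWC n x y (fun i s hs => h i s (Set.mem_iUnion.mpr ⟨n, hs⟩)) hn⟩ }
  have hle : MeasurableSpace.pi ≤ m := by
    refine iSup_le fun i => ?_
    rintro _ ⟨s, hs, rfl⟩
    exact ⟨{s}, Set.countable_singleton s, by simpa using hs,
      fun x y h hx => (h i s rfl).mp hx⟩
  exact hle M hM

end Separating

section Blocks

variable {A : Type*} {D : ℕ} [NeZero D]

def glueBlocks (P : ℤ × ℤ → (Fin D × Fin D) → A) : Config2 A := fun v =>
  let a := Int.divModEquiv D (v.1 - 1)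
  let b := Int.divModEquiv D (v.2 - 1)
  P (a.1, b.1) (a.2, b.2)

lemma patternAt_shiftC_glueBlocks (P : ℤ × ℤ → (Fin D × Fin D) → A) (m : ℤ × ℤ) :
    patternAt (shiftC ((D : ℤ) * m.1, (D : ℤ) * m.2) (glueBlocks P)) = P m := by
  funext q
  have h (k : ℤ) (r : Fin D) : Int.divModEquiv D ((D : ℤ) * k + ((r : ℤ) + 1) - 1) = (k, r) := by
    rw [show (D : ℤ) * k + ((r : ℤ) + 1) - 1 = (Int.divModEquiv D).symm (k, r) by
      rw [Int.divModEquiv_symm_apply]; ring, Equiv.apply_symm_apply]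
  simp only [patternAt, shiftC, glueBlocks, h]

lemma glueBlocks_patternAt_shiftC (x : Config2 A) :
    glueBlocks (D := D) (fun m => patternAt (shiftC ((D : ℤ) * m.1, (D : ℤ) * m.2) x)) = x := by
  funext v
  have h (t : ℤ) :
      (D : ℤ) * (Int.divModEquiv D (t - 1)).1 + (((Int.divModEquiv D (t - 1)).2 : ℤ) + 1) = t := by
    have := (Int.divModEquiv D).symm_apply_apply (t - 1)
    rw [Int.divModEquiv_symm_apply] at this
    linarith
  simp only [glueBlocks, patternAt, shiftC, h]

end Blocks

section Relaxed

variable {A : Type*} {D : ℕ}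

def relaxedCyl (C : Set (Set A)) (F : Set ((Fin D × Fin D) → A)) : Set (Config2 A) :=
  {x | ∃ p ∈ F, ∀ q, IndistinguishableBy C (p q) (patternAt x q)}

lemma cylOf_subset_relaxedCyl (C : Set (Set A)) (F : Set ((Fin D × Fin D) → A)) :
    cylOf F ⊆ relaxedCyl C F :=
  fun x hx => ⟨patternAt x, hx, fun _ => .refl C _⟩

lemma measurableSet_relaxedCyl [MeasurableSpace A] {C : Set (Set A)} (hC : C.Countable)
    (hCm : ∀ s ∈ C, MeasurableSet s) {F : Set ((Fin D × Fin D) → A)} (hF : F.Countable) :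
    MeasurableSet (relaxedCyl C F) := by
  have h : relaxedCyl C F = ⋃ p ∈ F, ⋂ q, (fun x : Config2 A => patternAt x q) ⁻¹'
      {a | IndistinguishableBy C (p q) a} := by
    ext x
    simp [relaxedCyl]
  rw [h]
  exact .biUnion hF fun p _ => .iInter fun q =>
    measurable_pi_apply _ (measurableSet_indistinguishableBy hC hCm (p q))

lemma exists_indistinguishableBy_forall_mem_cylOf [NeZero D] (C : Set (Set A))
    (F : Set ((Fin D × Fin D) → A)) (x : Config2 A) :
    ∃ y : Config2 A, (∀ v, IndistinguishableBy C (x v) (y v)) ∧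
      ∀ m : ℤ × ℤ, shiftC ((D : ℤ) * m.1, (D : ℤ) * m.2) x ∈ relaxedCyl C F →
        shiftC ((D : ℤ) * m.1, (D : ℤ) * m.2) y ∈ cylOf F := by
  classical
  let P : ℤ × ℤ → (Fin D × Fin D) → A := fun m =>
    if h : shiftC ((D : ℤ) * m.1, (D : ℤ) * m.2) x ∈ relaxedCyl C F then h.choose
    else patternAt (shiftC ((D : ℤ) * m.1, (D : ℤ) * m.2) x)
  have hP : ∀ m q, IndistinguishableBy C
      (patternAt (shiftC ((D : ℤ) * m.1, (D : ℤ) * m.2) x) q) (P m q) := by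
    intro m q
    by_cases h : shiftC ((D : ℤ) * m.1, (D : ℤ) * m.2) x ∈ relaxedCyl C F
    · simpa only [P, dif_pos h] using (h.choose_spec.2 q).symm
    · simpa only [P, dif_neg h] using .refl C _
  refine ⟨glueBlocks P, fun v => ?_, fun m hm => ?_⟩
  · conv_lhs => rw [← glueBlocks_patternAt_shiftC (D := D) x]
    exact hP _ _
  · change patternAt _ ∈ F
    rw [patternAt_shiftC_glueBlocks]
    simpa only [P, dif_pos hm] using hm.choose_spec.1

end Relaxed

section Grid

open Finset

variable {A : Type*}

-- The window `[t + 1, t + D]` lies in no interval `[u + ℓk + 1, u + ℓk + ℓ]` of the grid `u + ℓℤ`.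
def CrossesGridLine (ℓ D : ℕ) (u t : ℤ) : Prop :=
  (ℓ : ℤ) - D < (t - u) % ℓ

instance (ℓ D : ℕ) (u t : ℤ) : Decidable (CrossesGridLine ℓ D u t) :=
  Int.decLt _ _

lemma apply_add_eq_of_patternAt_shiftC_eq {n : ℕ} {x z : Config2 A} {t : ℤ × ℤ}
    (h : patternAt (m := n) (shiftC t x) = patternAt z) {s : ℤ × ℤ}
    (hs₁ : 0 < s.1) (hs₁' : s.1 ≤ n) (hs₂ : 0 < s.2) (hs₂' : s.2 ≤ n) :
    x (t.1 + s.1, t.2 + s.2) = z s := by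
  have := congrFun h (⟨(s.1 - 1).toNat, by omega⟩, ⟨(s.2 - 1).toNat, by omega⟩)
  simp only [patternAt, shiftC] at this
  rwa [Int.toNat_of_nonneg (by omega), Int.toNat_of_nonneg (by omega), sub_add_cancel,
    sub_add_cancel] at this

def IsGloballyAdmissible {D ℓ : ℕ} (F : Set ((Fin D × Fin D) → A))
    (L : Set ((Fin ℓ × Fin ℓ) → A)) : Prop :=
  ∀ w ∈ L, ∃ x : Config2 A, (∀ u : ℤ × ℤ, shiftC u x ∉ cylOf F) ∧ patternAt x = w

-- A window inside one interval of the grid is a subpattern of a globally admissible word.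
lemma crossesGridLine_of_mem_concat2 {D ℓ : ℕ} {F : Set ((Fin D × Fin D) → A)}
    {L : Set ((Fin ℓ × Fin ℓ) → A)} (hL : IsGloballyAdmissible F L) {y : Config2 A}
    (hy : y ∈ concat2 L) :
    ∃ u : ℤ × ℤ, 0 ≤ u.1 ∧ u.1 < ℓ ∧ 0 ≤ u.2 ∧ u.2 < ℓ ∧
      ∀ s : ℤ × ℤ, shiftC s y ∈ cylOf F →
        CrossesGridLine ℓ D u.1 s.1 ∨ CrossesGridLine ℓ D u.2 s.2 := by
  obtain ⟨u, hu₁, hu₁', hu₂, hu₂', hu⟩ := hy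
  refine ⟨u, hu₁, hu₁', hu₂, hu₂', fun s hs => ?_⟩
  by_contra! h
  simp only [CrossesGridLine, not_lt] at h
  obtain ⟨hr₁, hr₂⟩ := h
  have hℓ : (ℓ : ℤ) ≠ 0 := by omega
  set k : ℤ × ℤ := ((s.1 - u.1) / ℓ, (s.2 - u.2) / ℓ)
  set r : ℤ × ℤ := ((s.1 - u.1) % ℓ, (s.2 - u.2) % ℓ)
  have hr₁0 : 0 ≤ r.1 := Int.emod_nonneg _ hℓ
  have hr₂0 : 0 ≤ r.2 := Int.emod_nonneg _ hℓ
  replace hr₁ : r.1 ≤ ℓ - D := hr₁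
  replace hr₂ : r.2 ≤ ℓ - D := hr₂
  obtain ⟨z, hzF, hz⟩ := hL _ (hu k)
  refine hzF r ?_
  have hpat : patternAt (shiftC r z) = patternAt (m := D) (shiftC s y) := by
    funext q
    have hq₁ := q.1.isLt
    have hq₂ := q.2.isLt
    simp only [patternAt, shiftC]
    rw [← apply_add_eq_of_patternAt_shiftC_eq hz.symm (s := (r.1 + (q.1 + 1), r.2 + (q.2 + 1)))
      (by omega) (by omega) (by omega) (by omega)]
    have e₁ := Int.mul_ediv_add_emod (s.1 - u.1) ℓ
    have e₂ := Int.mul_ediv_add_emod (s.2 - u.2) ℓ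
    congr 2 <;> linarith
  change patternAt _ ∈ F
  rwa [hpat]

variable {ℓ D : ℕ}

-- Points of `Dℤ` are `D` apart, the crossing windows in one grid period start at fewer than `D`
-- points, and `[0, DKℓ)` meets at most `DK + 1` periods.
lemma card_filter_crossesGridLine_le (hD : 0 < D) (K : ℕ) {u : ℤ} (hu₀ : 0 ≤ u) (hu : u < ℓ) :
    #{t ∈ Ico (0 : ℤ) (K * ℓ) | CrossesGridLine ℓ D u (D * t)} ≤ D * K + 1 := by
  have hcard : #(Ico (-1 : ℤ) (D * K)) = D * K + 1 := by
    rw [Int.card_Ico, sub_neg_eq_add]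
    exact_mod_cast Int.toNat_natCast (D * K + 1)
  rw [← hcard]
  have hℓ : (0 : ℤ) < ℓ := by omega
  have hD' : (0 : ℤ) < D := by exact_mod_cast hD
  refine card_le_card_of_injOn (fun t => (D * t - u) / ℓ) (fun t ht => ?_) ?_
  · simp only [mem_coe, mem_filter, mem_Ico, coe_Ico, Set.mem_Ico] at ht ⊢
    constructor
    · rw [Int.le_ediv_iff_mul_le hℓ]
      nlinarith
    · rw [Int.ediv_lt_iff_lt_mul hℓ]
      nlinarith
  · intro t ht t' ht' heq
    have hr : (ℓ : ℤ) - D < (D * t - u) % ℓ := (mem_filter.mp ht).2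
    have hr' : (ℓ : ℤ) - D < (D * t' - u) % ℓ := (mem_filter.mp ht').2
    have e := Int.mul_ediv_add_emod (D * t - u) ℓ
    have e' := Int.mul_ediv_add_emod (D * t' - u) ℓ
    have hlt := Int.emod_lt_of_pos (D * t - u) hℓ
    have hlt' := Int.emod_lt_of_pos (D * t' - u) hℓ
    simp only at heq
    rw [heq] at e
    have h₁ : t - t' < 1 := lt_of_mul_lt_mul_left (by linarith : (D : ℤ) * (t - t') < D * 1) hD'.le
    have h₂ : t' - t < 1 := lt_of_mul_lt_mul_left (by linarith : (D : ℤ) * (t' - t) < D * 1) hD'.le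
    omega

lemma card_filter_crossesGridLine_prod_le (hD : 0 < D) (K : ℕ) {u : ℤ × ℤ} (hu₁ : 0 ≤ u.1)
    (hu₁' : u.1 < ℓ) (hu₂ : 0 ≤ u.2) (hu₂' : u.2 < ℓ) :
    #{m ∈ Ico (0 : ℤ) (K * ℓ) ×ˢ Ico (0 : ℤ) (K * ℓ) |
        CrossesGridLine ℓ D u.1 (D * m.1) ∨ CrossesGridLine ℓ D u.2 (D * m.2)}
      ≤ 2 * (D * K + 1) * (K * ℓ) := by
  have hI : #(Ico (0 : ℤ) (K * ℓ)) = K * ℓ := by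
    rw [Int.card_Ico, sub_zero, ← Nat.cast_mul, Int.toNat_natCast]
  set I := Ico (0 : ℤ) (K * ℓ)
  calc _ ≤ #{m ∈ I ×ˢ I | CrossesGridLine ℓ D u.1 (D * m.1)}
        + #{m ∈ I ×ˢ I | CrossesGridLine ℓ D u.2 (D * m.2)} := by
        rw [filter_or]
        exact card_union_le _ _
    _ ≤ (D * K + 1) * (K * ℓ) + (K * ℓ) * (D * K + 1) := by
        rw [filter_product_left (fun t => CrossesGridLine ℓ D u.1 (D * t)),
          filter_product_right (fun t => CrossesGridLine ℓ D u.2 (D * t)), card_product,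
          card_product, hI]
        gcongr
        exacts [card_filter_crossesGridLine_le hD K hu₁ hu₁',
          card_filter_crossesGridLine_le hD K hu₂ hu₂']
    _ = 2 * (D * K + 1) * (K * ℓ) := by ring

end Grid

section Averaging

open Finset

lemma ENNReal.le_of_forall_natCast_mul_le_mul_add {x y c : ℝ≥0∞} (hc : c ≠ ∞)
    (h : ∀ K : ℕ, 0 < K → K * x ≤ K * y + c) : x ≤ y := by
  refine ENNReal.le_of_forall_pos_le_add fun ε hε _ => ?_
  obtain ⟨K, hK⟩ := ENNReal.exists_nat_mul_gt (ENNReal.coe_ne_zero.mpr hε.ne') hc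
  have hK₀ : K ≠ 0 := by
    rintro rfl
    simp at hK
  rw [← ENNReal.mul_le_mul_iff_right (Nat.cast_ne_zero.mpr hK₀) (ENNReal.natCast_ne_top K),
    mul_add]
  exact (h K (Nat.pos_of_ne_zero hK₀)).trans (add_le_add_right hK.le _)

variable {α ι : Type*} [MeasurableSpace α] {ν : Measure α}

open Classical in
lemma card_mul_measure_le_of_ae_card_filter_le [IsProbabilityMeasure ν] (S : Finset ι)
    (T : ι → α → α) (hT : ∀ i ∈ S, MeasurePreserving (T i) ν ν) {B : Set α}
    (hB : MeasurableSet B) {c : ℕ} (hc : ∀ᵐ x ∂ν, #{i ∈ S | T i x ∈ B} ≤ c) :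
    #S * ν B ≤ c := by
  have hTB : ∀ i ∈ S, MeasurableSet (T i ⁻¹' B) := fun i hi => (hT i hi).measurable hB
  calc (#S : ℝ≥0∞) * ν B = ∑ i ∈ S, ν (T i ⁻¹' B) := by
        rw [sum_congr rfl fun i hi => (hT i hi).measure_preimage hB.nullMeasurableSet, sum_const,
          nsmul_eq_mul]
    _ = ∫⁻ x, ∑ i ∈ S, (T i ⁻¹' B).indicator 1 x ∂ν := by
        rw [lintegral_finsetSum _ fun i hi => measurable_one.indicator (hTB i hi)]
        exact sum_congr rfl fun i hi => (lintegral_indicator_one (hTB i hi)).symm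
    _ = ∫⁻ x, (#{i ∈ S | T i x ∈ B} : ℝ≥0∞) ∂ν := by
        simp only [natCast_card_filter, Set.indicator_apply, Set.mem_preimage, Pi.one_apply]
    _ ≤ ∫⁻ _, (c : ℝ≥0∞) ∂ν := lintegral_mono_ae (hc.mono fun x hx => by exact_mod_cast hx)
    _ = c := by simp

end Averaging

section Density

open Finset

variable {A : Type*} {D ℓ : ℕ} [NeZero D] {C : Set (Set A)} {F : Set ((Fin D × Fin D) → A)}
  {L : Set ((Fin ℓ × Fin ℓ) → A)} {M : Set (Config2 A)}

open Classical in
lemma card_filter_shiftC_mem_relaxedCyl_le (hL : IsGloballyAdmissible F L)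
    (hML : M ⊆ concat2 L) (hMC : IsSaturatedBy C M) {x : Config2 A} (hx : x ∈ M) (K : ℕ) :
    #{m ∈ Ico (0 : ℤ) (K * ℓ) ×ˢ Ico (0 : ℤ) (K * ℓ) |
        shiftC ((D : ℤ) * m.1, (D : ℤ) * m.2) x ∈ relaxedCyl C F}
      ≤ 2 * (D * K + 1) * (K * ℓ) := by
  obtain ⟨y, hxy, hy⟩ := exists_indistinguishableBy_forall_mem_cylOf C F x
  obtain ⟨u, hu₁, hu₁', hu₂, hu₂', hu⟩ := crossesGridLine_of_mem_concat2 hL (hML (hMC x y hxy hx))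
  refine (card_le_card fun m hm => ?_).trans
    (card_filter_crossesGridLine_prod_le (NeZero.pos D) K hu₁ hu₁' hu₂ hu₂')
  rw [mem_filter] at hm ⊢
  exact ⟨hm.1, hu _ (hy m hm.2)⟩

lemma natCast_mul_measure_relaxedCyl_le [MeasurableSpace A] {ν : Measure (Config2 A)}
    [IsProbabilityMeasure ν] (hinv : ∀ u, MeasurePreserving (shiftC u) ν ν)
    (hC : C.Countable) (hCm : ∀ s ∈ C, MeasurableSet s) (hF : F.Countable)
    (hL : IsGloballyAdmissible F L) (hML : M ⊆ concat2 L) (hMC : IsSaturatedBy C M)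
    (hM : ∀ᵐ x ∂ν, x ∈ M) {K : ℕ} (hK : 0 < K) :
    (K : ℝ≥0∞) * (ℓ * ν (relaxedCyl C F)) ≤ K * (2 * D) + 2 := by
  have hℓ : 0 < ℓ := by
    obtain ⟨x, hx⟩ := hM.exists
    obtain ⟨u, hu, hu', -⟩ := hML hx
    omega
  have h := card_mul_measure_le_of_ae_card_filter_le
    (Ico (0 : ℤ) (K * ℓ) ×ˢ Ico (0 : ℤ) (K * ℓ)) (fun m => shiftC ((D : ℤ) * m.1, (D : ℤ) * m.2))
    (fun _ _ => hinv _) (measurableSet_relaxedCyl hC hCm hF)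
    (hM.mono fun x hx => card_filter_shiftC_mem_relaxedCyl_le hL hML hMC hx K)
  rw [card_product, Int.card_Ico, sub_zero, ← Nat.cast_mul, Int.toNat_natCast] at h
  push_cast at h
  have hKℓ : (K : ℝ≥0∞) * ℓ ≠ 0 := by positivity
  refine (ENNReal.mul_le_mul_iff_right hKℓ (by finiteness)).mp ?_
  calc (K : ℝ≥0∞) * ℓ * (K * (ℓ * ν (relaxedCyl C F)))
      = K * ℓ * (K * ℓ) * ν (relaxedCyl C F) := by ring
    _ ≤ 2 * (D * K + 1) * (K * ℓ) := h
    _ = K * ℓ * (K * (2 * D) + 2) := by ring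

end Density

theorem stmt_16_general {A : Type*} [MeasurableSpace A] {D ℓ : ℕ}
    (hD : 2 ≤ D)
    (F : Set ((Fin D × Fin D) → A)) (hF : F.Finite)
    (L : Set ((Fin ℓ × Fin ℓ) → A))
    (hL : ∀ w ∈ L, ∃ x : Config2 A,
      (∀ u : ℤ × ℤ, shiftC u x ∉ cylOf F) ∧ patternAt x = w)
    (ν : Measure (Config2 A)) [IsProbabilityMeasure ν]
    (hinv : ∀ u, MeasurePreserving (shiftC u) ν ν)
    (hsupp : ν (concat2 L)ᶜ = 0) :
    ν (cylOf F) ≤ (2 * D : ENNReal) / (ℓ : ENNReal) := by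
  have : NeZero D := ⟨by omega⟩
  obtain ⟨N, hLN, hNm, hN⟩ := exists_measurable_superset_of_null hsupp
  obtain ⟨C, hC, hCm, hMC⟩ := hNm.compl.exists_countable_saturated
  have hK := fun K (hK : 0 < K) => natCast_mul_measure_relaxedCyl_le hinv hC hCm hF.countable hL
    (Set.compl_subset_comm.mp hLN) hMC (measure_eq_zero_iff_ae_notMem.mp hN) hK
  calc ν (cylOf F) ≤ ν (relaxedCyl C F) := measure_mono (cylOf_subset_relaxedCyl C F)
    _ ≤ 2 * D / ℓ := by
      rw [ENNReal.le_div_iff_mul_le (by simp; omega) (by simp), mul_comm]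
      exact ENNReal.le_of_forall_natCast_mul_le_mul_add (by simp) hK

/-- If `ν` is an ergodic shift-invariant probability measure whose support is
contained in the concatenated subshift `⟨L⟩` of a dictionary `L` of globally
admissible `ℓ × ℓ` patterns of the SFT `X = Σ²(A, F)` (with
`F ⊆ A^{[1,D]²}`), then `ν([F]) ≤ 2D/ℓ`. -/
theorem stmt_16 {A : Type*} [MeasurableSpace A] {D ℓ : ℕ}
    (hD : 2 ≤ D) (hDl : D ≤ ℓ)
    (F : Set ((Fin D × Fin D) → A)) (hF : F.Finite)
    (L : Set ((Fin ℓ × Fin ℓ) → A))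
    (hL : ∀ w ∈ L, ∃ x : Config2 A,
      (∀ u : ℤ × ℤ, shiftC u x ∉ cylOf F) ∧ patternAt x = w)
    (ν : Measure (Config2 A)) [IsProbabilityMeasure ν]
    (hinv : ∀ u, MeasurePreserving (shiftC u) ν ν)
    (herg : ∀ S : Set (Config2 A), MeasurableSet S →
      (∀ u, shiftC u ⁻¹' S = S) → ν S = 0 ∨ ν S = 1)
    (hsupp : ν (concat2 L)ᶜ = 0) :
    ν (cylOf F) ≤ (2 * D : ENNReal) / (ℓ : ENNReal) :=
  stmt_16_general hD F hF L hL ν hinv hsupp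
end

section
/- Let n > 2ℓ > 2 be integers, ε ∈ (0,1), and S ⊆ [0, n-2ℓ]² with card(S) ≥ n²(1-ε). Let X̂ be a ℤ²-subshift over alphabet Â whose configurations are vertically aligned over a one-dimensional alphabet Ã (so that every globally admissible ℓ×ℓ pattern is determined by a word in L(X̃, ℓ) of length ℓ together with at most C(ℓ) choices, where C is the relative complexity function). Let Ê = {w ∈ Â^{[1,n]²} : ∀u ∈ S, σ^u(w)|_{[1,2ℓ]²} ∈ L(X̂, 2ℓ)}. Then (1/n²)·log card(Ê) ≤ (1/ℓ)·log card(Ã) + (1/ℓ²)·log C(ℓ) + ε·log card(Â). -/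
open MeasureTheory

/-!
Round every `u ∈ S` up to the grid `ℓℤ²`: the `ℓ × ℓ` grid block with corner `ℓ⌈u/ℓ⌉` lies
inside the `2ℓ × 2ℓ` window at `u`, so it is globally admissible for every `w ∈ Ê`, and at most
`ℓ²` points of `S` round to the same block. The blocks obtained are disjoint and cover at least
`card S ≥ n²(1 - ε)` cells, so `w ∈ Ê` is determined by its admissible patterns on the at most
`n²/ℓ²` blocks (at most `card Ã ^ ℓ * C(ℓ)` choices each: a bottom row, then a pattern over it)
and by its values on the at most `εn²` remaining cells.
-/

namespace SquarePattern

/-- `p ∈ L(X, m)`. -/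
def IsAdmissible {A : Type*} (X : Set (Config2 A)) {m : ℕ} (p : Fin m × Fin m → A) : Prop :=
  ∃ x ∈ X, patternAt x = p

def window {A : Type*} {n : ℕ} (w : Fin n × Fin n → A) (m : ℕ) (u : ℕ × ℕ)
    (hu : u.1 + m ≤ n ∧ u.2 + m ≤ n) : Fin m × Fin m → A :=
  fun q => w (⟨u.1 + q.1, by omega⟩, ⟨u.2 + q.2, by omega⟩)

theorem window_window {A : Type*} {n m k : ℕ} (w : Fin n × Fin n → A) (u d : ℕ × ℕ)
    (hu : u.1 + m ≤ n ∧ u.2 + m ≤ n) (hd : d.1 + k ≤ m ∧ d.2 + k ≤ m) :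
    window (window w m u hu) k d hd = window w k (u.1 + d.1, u.2 + d.2) (by omega) := by
  funext q
  simp only [window, Nat.add_assoc]

theorem isAdmissible_window {A : Type*} {X : Set (Config2 A)} (hX : ∀ u, Set.MapsTo (shiftC u) X X)
    {m k : ℕ} {p : Fin m × Fin m → A} (hp : IsAdmissible X p) (d : ℕ × ℕ)
    (hd : d.1 + k ≤ m ∧ d.2 + k ≤ m) : IsAdmissible X (window p k d hd) := by
  obtain ⟨x, hx, rfl⟩ := hp
  refine ⟨shiftC ((d.1 : ℤ), (d.2 : ℤ)) x, hX _ hx, funext fun q => ?_⟩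
  simp only [patternAt, shiftC, window]
  push_cast
  ring_nf

theorem isAdmissible_window_of_le {A : Type*} {X : Set (Config2 A)}
    (hX : ∀ u, Set.MapsTo (shiftC u) X X) {n m k : ℕ} {w : Fin n × Fin n → A} {u v : ℕ × ℕ}
    {hu : u.1 + m ≤ n ∧ u.2 + m ≤ n} (h : IsAdmissible X (window w m u hu))
    (h₁ : u.1 ≤ v.1) (h₂ : u.2 ≤ v.2) (h₁' : v.1 + k ≤ u.1 + m) (h₂' : v.2 + k ≤ u.2 + m)
    (hv : v.1 + k ≤ n ∧ v.2 + k ≤ n) : IsAdmissible X (window w k v hv) := by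
  have h_sub := isAdmissible_window (k := k) hX h (v.1 - u.1, v.2 - u.2) (by dsimp only; omega)
  rw [window_window] at h_sub
  convert h_sub using 2
  ext <;> dsimp only <;> omega

theorem card_subtype_le_card_mul_of_card_fiber_le {T β : Type*} [Finite T] [Fintype β]
    (P : T → Prop) (f : T → β) {c : ℕ} (hc : ∀ b, Nat.card {t // P t ∧ f t = b} ≤ c) :
    Nat.card {t // P t} ≤ Fintype.card β * c := by
  have : Fintype T := Fintype.ofFinite T
  calc Nat.card {t // P t}
      = Nat.card (Σ b, {t : {t // P t} // f t = b}) :=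
        Nat.card_congr (Equiv.sigmaFiberEquiv _).symm
    _ = ∑ b, Nat.card {t // P t ∧ f t = b} := by
        rw [Nat.card_sigma]
        exact Finset.sum_congr rfl fun b _ =>
          Nat.card_congr (Equiv.subtypeSubtypeEquivSubtypeInter P (f · = b))
    _ ≤ ∑ _b : β, c := Finset.sum_le_sum fun b _ => hc b
    _ = Fintype.card β * c := by simp

theorem card_isAdmissible_le {A C : Type*} [Fintype A] [Fintype C] (X : Set (Config2 (A × C)))
    {ℓ Cl : ℕ} (hℓ : 0 < ℓ)
    (hC : ∀ wt : Fin ℓ → A, Nat.card {p : Fin ℓ × Fin ℓ → A × C //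
      IsAdmissible X p ∧ ∀ i, (p (i, ⟨0, hℓ⟩)).1 = wt i} ≤ Cl) :
    Nat.card {p : Fin ℓ × Fin ℓ → A × C // IsAdmissible X p} ≤ Fintype.card A ^ ℓ * Cl := by
  have h := card_subtype_le_card_mul_of_card_fiber_le (IsAdmissible X)
    (fun p i => (p (i, ⟨0, hℓ⟩)).1) fun wt => (hC wt).trans_eq' <|
      Nat.card_congr <| Equiv.subtypeEquivRight fun _ => and_congr_right' funext_iff.symm
  simpa using h

theorem le_mul_ceilDiv_lt {ℓ : ℕ} (hℓ : 0 < ℓ) (u : ℕ) :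
    u ≤ ℓ * (u ⌈/⌉ ℓ) ∧ ℓ * (u ⌈/⌉ ℓ) < u + ℓ := by
  have := Nat.div_add_mod (u + ℓ - 1) ℓ
  have := Nat.mod_lt (u + ℓ - 1) hℓ
  rw [Nat.ceilDiv_eq_add_pred_div]
  omega

theorem eq_of_mul_add_eq_mul_add {ℓ k k' q q' : ℕ} (hq : q < ℓ) (hq' : q' < ℓ)
    (h : ℓ * k + q = ℓ * k' + q') : k = k' ∧ q = q' := by
  have h_divMod : ∀ {k q}, q < ℓ → (ℓ * k + q) / ℓ = k ∧ (ℓ * k + q) % ℓ = q :=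
    fun hq => (Nat.div_mod_unique (by omega)).2 ⟨add_comm _ _, hq⟩
  obtain ⟨hk, hq₀⟩ := h_divMod (k := k) hq
  obtain ⟨hk', hq₀'⟩ := h_divMod (k := k') hq'
  rw [h] at hk hq₀
  exact ⟨hk.symm.trans hk', hq₀.symm.trans hq₀'⟩

def ceilGrid (ℓ : ℕ) (S : Finset (ℕ × ℕ)) : Finset (ℕ × ℕ) :=
  S.image fun u => (u.1 ⌈/⌉ ℓ, u.2 ⌈/⌉ ℓ)

theorem exists_window_of_mem_ceilGrid {ℓ : ℕ} (hℓ : 0 < ℓ) {S : Finset (ℕ × ℕ)} {k : ℕ × ℕ}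
    (hk : k ∈ ceilGrid ℓ S) : ∃ u ∈ S, u.1 ≤ ℓ * k.1 ∧ u.2 ≤ ℓ * k.2 ∧
      ℓ * k.1 + ℓ ≤ u.1 + 2 * ℓ ∧ ℓ * k.2 + ℓ ≤ u.2 + 2 * ℓ := by
  obtain ⟨u, hu, rfl⟩ := Finset.mem_image.1 hk
  have := le_mul_ceilDiv_lt hℓ u.1
  have := le_mul_ceilDiv_lt hℓ u.2
  exact ⟨u, hu, by dsimp only; omega⟩

theorem mul_add_le_of_mem_ceilGrid {ℓ n : ℕ} (hℓ : 0 < ℓ) {S : Finset (ℕ × ℕ)}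
    (hS : ∀ u ∈ S, u.1 + 2 * ℓ ≤ n ∧ u.2 + 2 * ℓ ≤ n) :
    ∀ k ∈ ceilGrid ℓ S, ℓ * k.1 + ℓ ≤ n ∧ ℓ * k.2 + ℓ ≤ n := by
  intro k hk
  obtain ⟨u, hu, _⟩ := exists_window_of_mem_ceilGrid hℓ hk
  have := hS u hu
  omega

theorem card_le_mul_card_ceilGrid {ℓ : ℕ} (hℓ : 0 < ℓ) (S : Finset (ℕ × ℕ)) :
    S.card ≤ ℓ * ℓ * (ceilGrid ℓ S).card := by
  refine Finset.card_le_mul_card_image S (ℓ * ℓ) fun k _ => ?_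
  calc (S.filter fun u => (u.1 ⌈/⌉ ℓ, u.2 ⌈/⌉ ℓ) = k).card
      ≤ (Finset.Ico (ℓ * k.1 + 1 - ℓ) (ℓ * k.1 + 1) ×ˢ
          Finset.Ico (ℓ * k.2 + 1 - ℓ) (ℓ * k.2 + 1)).card := by
        refine Finset.card_le_card fun u hu => ?_
        obtain ⟨-, rfl⟩ := Finset.mem_filter.1 hu
        have := le_mul_ceilDiv_lt hℓ u.1
        have := le_mul_ceilDiv_lt hℓ u.2
        simp only [Finset.mem_product, Finset.mem_Ico]
        omega
    _ ≤ ℓ * ℓ := by simp only [Finset.card_product, Nat.card_Ico]; gcongr <;> omega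

def gridBlock {ℓ n : ℕ} (K : Finset (ℕ × ℕ)) (hK : ∀ k ∈ K, ℓ * k.1 + ℓ ≤ n ∧ ℓ * k.2 + ℓ ≤ n) :
    K × (Fin ℓ × Fin ℓ) → Fin n × Fin n :=
  fun ⟨k, q⟩ => (⟨ℓ * k.1.1 + q.1, by have := hK k k.2; omega⟩,
    ⟨ℓ * k.1.2 + q.2, by have := hK k k.2; omega⟩)

theorem gridBlock_injective {ℓ n : ℕ} (K : Finset (ℕ × ℕ))
    (hK : ∀ k ∈ K, ℓ * k.1 + ℓ ≤ n ∧ ℓ * k.2 + ℓ ≤ n) : Function.Injective (gridBlock K hK) := by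
  rintro ⟨k, q⟩ ⟨k', q'⟩ h
  simp only [gridBlock, Prod.mk.injEq, Fin.mk.injEq] at h
  obtain ⟨hk₁, hq₁⟩ := eq_of_mul_add_eq_mul_add q.1.2 q'.1.2 h.1
  obtain ⟨hk₂, hq₂⟩ := eq_of_mul_add_eq_mul_add q.2.2 q'.2.2 h.2
  ext <;> assumption

theorem card_le_of_injective_blocks {ι β κ α : Type*} [Fintype ι] [Fintype β] [Fintype κ]
    [Fintype α] {blk : β × κ → ι} (hblk : Function.Injective blk)
    (P : (κ → α) → Prop) (E : (ι → α) → Prop) (hE : ∀ w, E w → ∀ b, P fun q => w (blk (b, q))) :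
    Nat.card {w // E w} ≤ Nat.card {p // P p} ^ Fintype.card β *
      Fintype.card α ^ (Fintype.card ι - Fintype.card β * Fintype.card κ) := by
  classical
  let encode : {w // E w} → (β → {p // P p}) × (↥(Set.range blk)ᶜ → α) :=
    fun w => (fun b => ⟨_, hE w.1 w.2 b⟩, fun c => w.1 c)
  have h_inj : Function.Injective encode := by
    rintro ⟨w, hw⟩ ⟨w', hw'⟩ h
    obtain ⟨h_blk, h_free⟩ := Prod.ext_iff.1 h
    ext c
    by_cases hc : c ∈ Set.range blk
    · obtain ⟨⟨b, q⟩, rfl⟩ := hc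
      exact congrFun (congrArg Subtype.val (congrFun h_blk b)) q
    · exact congrFun h_free ⟨c, hc⟩
  calc Nat.card {w // E w}
      ≤ Nat.card ((β → {p // P p}) × (↥(Set.range blk)ᶜ → α)) :=
        Nat.card_le_card_of_injective encode h_inj
    _ = _ := by
        rw [Nat.card_prod, Nat.card_fun, Nat.card_fun, Nat.card_eq_fintype_card,
          Nat.card_eq_fintype_card, Nat.card_eq_fintype_card (α := α),
          Nat.card_eq_fintype_card (α := ↥(Set.range blk)ᶜ), Fintype.card_compl_set,
          Set.card_range_of_injective hblk, Fintype.card_prod]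

theorem log_le_log_add_log_of_le_mul {N a b : ℕ} (h : N ≤ a * b) :
    Real.log N ≤ Real.log a + Real.log b := by
  rcases N.eq_zero_or_pos with rfl | hN
  · simpa using add_nonneg (Real.log_natCast_nonneg a) (Real.log_natCast_nonneg b)
  · have hab : 0 < a * b := hN.trans_le h
    rw [← Real.log_mul (Nat.cast_ne_zero.2 (left_ne_zero_of_mul hab.ne'))
      (Nat.cast_ne_zero.2 (right_ne_zero_of_mul hab.ne'))]
    exact Real.log_le_log (by positivity) (by exact_mod_cast h)

theorem log_div_sq_le_of_le_pow_mul_pow {N a c b ℓ n B F : ℕ} {ε : ℝ} (hℓ : 0 < ℓ) (hε : 0 ≤ ε)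
    (hN : N ≤ (a ^ ℓ * c) ^ B * b ^ F) (hB : ℓ * ℓ * B ≤ n * n) (hF : (F : ℝ) ≤ ε * n ^ 2) :
    Real.log N / n ^ 2 ≤ 1 / ℓ * Real.log a + 1 / ℓ ^ 2 * Real.log c + ε * Real.log b := by
  have ha := Real.log_natCast_nonneg a
  have hc := Real.log_natCast_nonneg c
  have hb := Real.log_natCast_nonneg b
  have hℓ' : (0 : ℝ) < ℓ := by exact_mod_cast hℓ
  have hB' : (ℓ : ℝ) ^ 2 * B ≤ n ^ 2 := by
    have := (Nat.cast_le (α := ℝ)).2 hB; push_cast at this; nlinarith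
  have h_log : Real.log N ≤ B * (ℓ * Real.log a + Real.log c) + F * Real.log b := by
    calc Real.log N
        ≤ Real.log ((a ^ ℓ * c) ^ B : ℕ) + Real.log (b ^ F : ℕ) :=
          log_le_log_add_log_of_le_mul hN
      _ = B * Real.log (a ^ ℓ * c : ℕ) + F * Real.log b := by
          rw [Nat.cast_pow, Real.log_pow, Nat.cast_pow, Real.log_pow]
      _ ≤ B * (Real.log (a ^ ℓ : ℕ) + Real.log c) + F * Real.log b := by
          gcongr; exact log_le_log_add_log_of_le_mul le_rfl
      _ = B * (ℓ * Real.log a + Real.log c) + F * Real.log b := by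
          rw [Nat.cast_pow, Real.log_pow]
  refine div_le_of_le_mul₀ (by positivity) (by positivity) (h_log.trans ?_)
  have h₁ : (B : ℝ) * ℓ ≤ n ^ 2 / ℓ := by rw [le_div_iff₀ hℓ']; nlinarith
  have h₂ : (B : ℝ) ≤ n ^ 2 / ℓ ^ 2 := by rw [le_div_iff₀ (by positivity)]; nlinarith
  calc (B : ℝ) * (ℓ * Real.log a + Real.log c) + F * Real.log b
      = B * ℓ * Real.log a + B * Real.log c + F * Real.log b := by ring
    _ ≤ n ^ 2 / ℓ * Real.log a + n ^ 2 / ℓ ^ 2 * Real.log c + ε * n ^ 2 * Real.log b := by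
        gcongr
    _ = _ := by ring

end SquarePattern

open SquarePattern

/-- Counting bound via the relative complexity function. Let `X̂` be a
`ℤ²`-subshift over the product alphabet `Â = Ã × C`, let `Cl` bound the
number of globally admissible `ℓ × ℓ` patterns of `X̂` lying over any given
bottom-row word `w̃ ∈ Ã^ℓ` (relative complexity), let `S ⊆ [0, n-2ℓ]²` have
`card S ≥ n²(1-ε)`, and let
`Ê = {w ∈ Â^{[1,n]²} : ∀ u ∈ S, σᵘ(w)|_{[1,2ℓ]²} ∈ L(X̂, 2ℓ)}`.
Then `(1/n²)·log card Ê ≤ (1/ℓ)·log card Ã + (1/ℓ²)·log Cl + ε·log card Â`. -/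
theorem stmt_19 {Atil C : Type*} [Fintype Atil] [Fintype C]
    {n ℓ : ℕ} (hℓ : 1 < ℓ)
    (ε : ℝ) (hε0 : 0 < ε)
    (Xh : Set (Config2 (Atil × C)))
    (hXinv : ∀ u : ℤ × ℤ, shiftC u '' Xh = Xh)
    (S : Finset (ℕ × ℕ))
    (hS : ∀ u ∈ S, u.1 + 2 * ℓ ≤ n ∧ u.2 + 2 * ℓ ≤ n)
    (hScard : (n : ℝ) ^ 2 * (1 - ε) ≤ S.card)
    (Cl : ℕ)
    (hC : ∀ wt : Fin ℓ → Atil,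
      Nat.card {p : (Fin ℓ × Fin ℓ) → Atil × C //
        (∃ x ∈ Xh, patternAt x = p) ∧
        ∀ i : Fin ℓ, (p (i, ⟨0, by omega⟩)).1 = wt i} ≤ Cl) :
    Real.log (Nat.card {w : (Fin n × Fin n) → Atil × C //
        ∀ u ∈ S, ∀ (h1 : u.1 + 2 * ℓ ≤ n) (h2 : u.2 + 2 * ℓ ≤ n),
          ∃ x ∈ Xh, ∀ q : Fin (2 * ℓ) × Fin (2 * ℓ),
            x ((q.1 : ℤ) + 1, (q.2 : ℤ) + 1) =
              w (⟨u.1 + q.1, by omega⟩, ⟨u.2 + q.2, by omega⟩)}) / (n : ℝ) ^ 2 ≤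
      (1 / (ℓ : ℝ)) * Real.log (Fintype.card Atil) +
        (1 / (ℓ : ℝ) ^ 2) * Real.log Cl +
        ε * Real.log (Fintype.card (Atil × C)) := by
  have hℓ₀ : 0 < ℓ := by omega
  have hX u : Set.MapsTo (shiftC u) Xh Xh := Set.mapsTo_iff_image_subset.2 (hXinv u).subset
  set K := ceilGrid ℓ S
  have hK := mul_add_le_of_mem_ceilGrid hℓ₀ hS
  have hK_card := Fintype.card_le_of_injective _ (gridBlock_injective K hK)
  simp only [Fintype.card_prod, Fintype.card_coe, Fintype.card_fin] at hK_card
  refine log_div_sq_le_of_le_pow_mul_pow (B := K.card) (F := n * n - K.card * (ℓ * ℓ)) hℓ₀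
    hε0.le ((card_le_of_injective_blocks (gridBlock_injective K hK) (IsAdmissible Xh) _
      fun w hw k => ?_).trans ?_) (by simpa [mul_comm] using hK_card) ?_
  · obtain ⟨u, hu, hku⟩ := exists_window_of_mem_ceilGrid hℓ₀ k.2
    obtain ⟨x, hx, hxw⟩ := hw u hu (hS u hu).1 (hS u hu).2
    exact isAdmissible_window_of_le hX (hu := hS u hu) (v := (ℓ * k.1.1, ℓ * k.1.2))
      ⟨x, hx, funext hxw⟩ hku.1 hku.2.1 hku.2.2.1 hku.2.2.2 (hK k k.2)
  · simp only [Fintype.card_prod, Fintype.card_coe, Fintype.card_fin]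
    gcongr
    exact card_isAdmissible_le Xh hℓ₀ hC
  · have hS_card : (S.card : ℝ) ≤ ℓ * ℓ * K.card := by
      exact_mod_cast card_le_mul_card_ceilGrid hℓ₀ S
    rw [Nat.cast_sub hK_card]
    push_cast
    linarith
end
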